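/- Average heat absorbed by the dephased qubit engine: in the qubit Otto setup, the dephased average heat absorbed ⟨⟨Q_M⟩⟩ := Tr[Φ(Δ₂(U ρ₁ U†)) H₂] − Tr[U ρ₁ U† H₂] equals 2(1 − 2δ′) θ ν₂ tanh(βν₁). -/

import Mathlib

/-!
Write `P = f₊f₊ᴴ`, `Q = f₋f₋ᴴ`, and `p`, `q` for the populations `f₊ᴴσf₊`, `f₋ᴴσf₋` of
`σ = Uρ₁Uᴴ`. Dephasing gives `Δ₂σ = pP + qQ` and unitality gives `Φ(Q) = 1 - Φ(P)`, so
`Φ(Δ₂σ) = q • 1 + (p - q) • Φ(P)`. As `Tr H₂ = 0` and trace preservation gives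
`f₊ᴴΦ(P)f₊ = 1 - θ`, the heat is `-2θν₂(p - q)`. The transition probabilities `|f_±ᴴUe_±|²`
form a doubly stochastic `2 × 2` matrix, hence are `1 - δ′, δ′, δ′, 1 - δ′`, and so
`p - q = (1 - 2δ′)(e^{-βν₁} - e^{βν₁}) / (2 cosh βν₁) = -(1 - 2δ′) tanh βν₁`.
-/

open Matrix

namespace Matrix

section CommRing

variable {n R : Type*} [Fintype n] [CommRing R]

theorem trace_mul_vecMulVec (X : Matrix n n R) (v w : n → R) :
    (X * vecMulVec v w).trace = w ⬝ᵥ (X *ᵥ v) := by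
  rw [mul_vecMulVec, trace_vecMulVec, dotProduct_comm]

variable [StarRing R]

theorem vecMulVec_star_mul_mul_vecMulVec_star (v : n → R) (X : Matrix n n R) :
    vecMulVec v (star v) * X * vecMulVec v (star v) =
      (star v ⬝ᵥ (X *ᵥ v)) • vecMulVec v (star v) := by
  rw [Matrix.mul_assoc, mul_vecMulVec, vecMulVec_mul_vecMulVec, vecMulVec_smul]

theorem mul_vecMulVec_star_mul_conjTranspose (U : Matrix n n R) (v : n → R) :
    U * vecMulVec v (star v) * Uᴴ = vecMulVec (U *ᵥ v) (star (U *ᵥ v)) := by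
  rw [mul_vecMulVec, vecMulVec_mul, star_mulVec]

theorem star_mulVec_dotProduct_mulVec_of_conjTranspose_mul_self [DecidableEq n] {U : Matrix n n R}
    (hU : Uᴴ * U = 1) (v : n → R) : star (U *ᵥ v) ⬝ᵥ (U *ᵥ v) = star v ⬝ᵥ v := by
  rw [dotProduct_mulVec, star_mulVec, vecMul_vecMul, hU, vecMul_one]

theorem sum_vecMulVec_star_eq_one [DecidableEq n] (b : n → n → R)
    (hb : ∀ i j, star (b i) ⬝ᵥ b j = (1 : Matrix n n R) i j) :
    ∑ i, vecMulVec (b i) (star (b i)) = 1 := by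
  have hcols : (of b).map star * (of b)ᵀ = 1 := by
    ext i j
    rw [← hb i j]
    rfl
  rw [← mul_eq_one_comm.mp hcols]
  ext j k
  simp [Matrix.mul_apply, vecMulVec_apply, Matrix.sum_apply]

theorem vecMulVec_star_add_vecMulVec_star_eq_one {u w : Fin 2 → R} (hu : star u ⬝ᵥ u = 1)
    (hw : star w ⬝ᵥ w = 1) (huw : star u ⬝ᵥ w = 0) :
    vecMulVec u (star u) + vecMulVec w (star w) = 1 := by
  have hwu : star w ⬝ᵥ u = 0 := by rw [star_dotProduct, huw, star_zero]
  simpa using sum_vecMulVec_star_eq_one ![u, w] (by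
    intro i j
    fin_cases i <;> fin_cases j <;> simp [hu, hw, huw, hwu])

theorem trace_map_dephase_mul_sub_trace_mul [DecidableEq n] (Φ : Matrix n n R →ₗ[R] Matrix n n R)
    (hΦ₁ : Φ 1 = 1) (hΦtr : ∀ X, (Φ X).trace = X.trace) {u w : n → R} (hu : star u ⬝ᵥ u = 1)
    (hw : star w ⬝ᵥ w = 1) (huw : vecMulVec u (star u) + vecMulVec w (star w) = 1) (ν : R)
    (σ : Matrix n n R) :
    (Φ (vecMulVec u (star u) * σ * vecMulVec u (star u) +
          vecMulVec w (star w) * σ * vecMulVec w (star w)) *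
        (ν • (vecMulVec u (star u) - vecMulVec w (star w)))).trace -
      (σ * (ν • (vecMulVec u (star u) - vecMulVec w (star w)))).trace =
      -2 * (star w ⬝ᵥ (Φ (vecMulVec u (star u)) *ᵥ w)) * ν *
        (star u ⬝ᵥ (σ *ᵥ u) - star w ⬝ᵥ (σ *ᵥ w)) := by
  have hH : ∀ X : Matrix n n R, (X * (ν • (vecMulVec u (star u) - vecMulVec w (star w)))).trace =
      ν * (star u ⬝ᵥ (X *ᵥ u) - star w ⬝ᵥ (X *ᵥ w)) := fun X => by
    rw [Matrix.mul_smul, trace_smul, Matrix.mul_sub, trace_sub, trace_mul_vecMulVec,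
      trace_mul_vecMulVec, smul_eq_mul]
  have hΦw : Φ (vecMulVec w (star w)) = 1 - Φ (vecMulVec u (star u)) := by
    rw [eq_sub_iff_add_eq, add_comm, ← map_add, huw, hΦ₁]
  have hΦu : star u ⬝ᵥ (Φ (vecMulVec u (star u)) *ᵥ u) =
      1 - star w ⬝ᵥ (Φ (vecMulVec u (star u)) *ᵥ w) := by
    have h := congrArg trace (congrArg (Φ (vecMulVec u (star u)) * ·) huw)
    simp only [Matrix.mul_add, trace_add, trace_mul_vecMulVec, Matrix.mul_one, hΦtr,
      trace_vecMulVec, dotProduct_comm u, hu] at h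
    exact eq_sub_of_add_eq h
  rw [vecMulVec_star_mul_mul_vecMulVec_star, vecMulVec_star_mul_mul_vecMulVec_star, map_add,
    map_smul, map_smul, hΦw, hH, hH]
  simp only [add_mulVec, smul_mulVec, sub_mulVec, one_mulVec, dotProduct_add, dotProduct_smul,
    dotProduct_sub, smul_eq_mul, hΦu, hu, hw]
  ring

end CommRing

section Kraus

variable {ι n R : Type*} [Fintype ι] [Fintype n] [CommRing R] [StarRing R]

def krausMap (K : ι → Matrix n n R) : Matrix n n R →ₗ[R] Matrix n n R where
  toFun X := ∑ k, K k * X * (K k)ᴴ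
  map_add' X Y := by simp only [Matrix.mul_add, Matrix.add_mul, Finset.sum_add_distrib]
  map_smul' c X := by
    simp only [Matrix.mul_smul, Matrix.smul_mul, Finset.smul_sum, RingHom.id_apply]

theorem krausMap_apply (K : ι → Matrix n n R) (X : Matrix n n R) :
    krausMap K X = ∑ k, K k * X * (K k)ᴴ := rfl

theorem krausMap_one [DecidableEq n] {K : ι → Matrix n n R} (hK : ∑ k, K k * (K k)ᴴ = 1) :
    krausMap K 1 = 1 := by
  simpa only [krausMap_apply, Matrix.mul_one] using hK

theorem trace_krausMap [DecidableEq n] {K : ι → Matrix n n R} (hK : ∑ k, (K k)ᴴ * K k = 1)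
    (X : Matrix n n R) : (krausMap K X).trace = X.trace := by
  simp_rw [krausMap_apply, trace_sum, trace_mul_cycle _ X, ← trace_sum, ← Finset.sum_mul, hK,
    Matrix.one_mul]

end Kraus

section RCLike

variable {n 𝕜 : Type*} [Fintype n] [RCLike 𝕜]

theorem star_dotProduct_vecMulVec_star_mulVec (v w : n → 𝕜) :
    star w ⬝ᵥ (vecMulVec v (star v) *ᵥ w) = (‖star v ⬝ᵥ w‖ : 𝕜) ^ 2 := by
  rw [vecMulVec_mulVec, op_smul_eq_smul, dotProduct_smul, smul_eq_mul, star_dotProduct w v,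
    ← RCLike.mul_conj]
  rfl

theorem norm_star_dotProduct_comm (v w : n → 𝕜) : ‖star v ⬝ᵥ w‖ = ‖star w ⬝ᵥ v‖ := by
  rw [star_dotProduct, norm_star]

theorem norm_sq_add_norm_sq_star_dotProduct [DecidableEq n] {u w : n → 𝕜}
    (huw : vecMulVec u (star u) + vecMulVec w (star w) = 1) (x : n → 𝕜) :
    (‖star u ⬝ᵥ x‖ : 𝕜) ^ 2 + (‖star w ⬝ᵥ x‖ : 𝕜) ^ 2 = star x ⬝ᵥ x := by
  have h := congrArg (fun A => star x ⬝ᵥ (A *ᵥ x)) huw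
  simpa only [add_mulVec, dotProduct_add, star_dotProduct_vecMulVec_star_mulVec, one_mulVec]
    using h

theorem star_dotProduct_conj_vecMulVec_star_mulVec (U : Matrix n n 𝕜) (e f : n → 𝕜) :
    star f ⬝ᵥ ((U * vecMulVec e (star e) * Uᴴ) *ᵥ f) = (‖star f ⬝ᵥ (U *ᵥ e)‖ : 𝕜) ^ 2 := by
  rw [mul_vecMulVec_star_mul_conjTranspose, star_dotProduct_vecMulVec_star_mulVec,
    norm_star_dotProduct_comm]

theorem populations_sub_of_unitary [DecidableEq n] {ep em fp fm : n → 𝕜}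
    (hep : star ep ⬝ᵥ ep = 1) (hem : star em ⬝ᵥ em = 1) (hfp : star fp ⬝ᵥ fp = 1)
    (hPe : vecMulVec ep (star ep) + vecMulVec em (star em) = 1)
    (hPf : vecMulVec fp (star fp) + vecMulVec fm (star fm) = 1)
    {U : Matrix n n 𝕜} (hU : Uᴴ * U = 1) (hU' : U * Uᴴ = 1) (a b : 𝕜) :
    star fp ⬝ᵥ ((U * (a • vecMulVec ep (star ep) + b • vecMulVec em (star em)) * Uᴴ) *ᵥ fp) -
        star fm ⬝ᵥ ((U * (a • vecMulVec ep (star ep) + b • vecMulVec em (star em)) * Uᴴ) *ᵥ fm) =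
      (a - b) * (1 - 2 * (‖star fp ⬝ᵥ (U *ᵥ em)‖ : 𝕜) ^ 2) := by
  have hpop : ∀ (c d : 𝕜) (f : n → 𝕜),
      star f ⬝ᵥ ((U * (c • vecMulVec ep (star ep) + d • vecMulVec em (star em)) * Uᴴ) *ᵥ f) =
        c * (‖star f ⬝ᵥ (U *ᵥ ep)‖ : 𝕜) ^ 2 + d * (‖star f ⬝ᵥ (U *ᵥ em)‖ : 𝕜) ^ 2 := by
    intro c d f
    simp only [Matrix.mul_add, Matrix.add_mul, Matrix.mul_smul, Matrix.smul_mul, add_mulVec,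
      smul_mulVec, dotProduct_add, dotProduct_smul, smul_eq_mul,
      star_dotProduct_conj_vecMulVec_star_mulVec]
  have hrow := hpop 1 1 fp
  rw [one_smul, one_smul, hPe, Matrix.mul_one, hU', one_mulVec, hfp] at hrow
  have hcol : ∀ e, star e ⬝ᵥ e = 1 →
      (‖star fp ⬝ᵥ (U *ᵥ e)‖ : 𝕜) ^ 2 + (‖star fm ⬝ᵥ (U *ᵥ e)‖ : 𝕜) ^ 2 = 1 := fun e he => by
    rw [norm_sq_add_norm_sq_star_dotProduct hPf,
      star_mulVec_dotProduct_mulVec_of_conjTranspose_mul_self hU, he]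
  rw [hpop, hpop]
  linear_combination (-2 * a) * hrow - a * hcol ep hep - b * hcol em hem

end RCLike

end Matrix

theorem Real.exp_neg_sub_exp_div_two_mul_cosh (x : ℝ) :
    (Real.exp (-x) - Real.exp x) / (2 * Real.cosh x) = -Real.tanh x := by
  rw [Real.tanh_eq_sinh_div_cosh, Real.sinh_eq]
  field_simp
  ring

theorem dephased_heat_absorbed_qubit_general
    (β ν₁ ν₂ : ℝ)
    (ep em fp fm : Fin 2 → ℂ)
    (hep : star ep ⬝ᵥ ep = 1) (hem : star em ⬝ᵥ em = 1) (hepm : star ep ⬝ᵥ em = 0)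
    (hfp : star fp ⬝ᵥ fp = 1) (hfm : star fm ⬝ᵥ fm = 1) (hfpm : star fp ⬝ᵥ fm = 0)
    (H₂ ρ₁ : Matrix (Fin 2) (Fin 2) ℂ)
    (hH₂ : H₂ = (ν₂ : ℂ) • (vecMulVec fp (star fp) - vecMulVec fm (star fm)))
    (hρ₁ : ρ₁ = ((2 * Real.cosh (β * ν₁) : ℝ) : ℂ)⁻¹ •
        ((Real.exp (-(β * ν₁)) : ℂ) • vecMulVec ep (star ep) +
         (Real.exp (β * ν₁) : ℂ) • vecMulVec em (star em)))
    (U : Matrix (Fin 2) (Fin 2) ℂ)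
    (hU : Uᴴ * U = 1) (hU' : U * Uᴴ = 1)
    {K : ℕ} (Kr : Fin K → Matrix (Fin 2) (Fin 2) ℂ)
    (hKr : ∑ k, (Kr k)ᴴ * Kr k = 1) (hKr' : ∑ k, Kr k * (Kr k)ᴴ = 1)
    (Φ : Matrix (Fin 2) (Fin 2) ℂ → Matrix (Fin 2) (Fin 2) ℂ)
    (hΦ : ∀ X, Φ X = ∑ k, Kr k * X * (Kr k)ᴴ)
    (Δ₂ : Matrix (Fin 2) (Fin 2) ℂ → Matrix (Fin 2) (Fin 2) ℂ)
    (hΔ₂ : ∀ X, Δ₂ X = vecMulVec fp (star fp) * X * vecMulVec fp (star fp) +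
        vecMulVec fm (star fm) * X * vecMulVec fm (star fm))
    (δ' : ℝ) (hδ' : δ' = ‖star fp ⬝ᵥ (U *ᵥ em)‖ ^ 2)
    (θ : ℂ) (hθ : θ = star fm ⬝ᵥ (Φ (vecMulVec fp (star fp)) *ᵥ fm)) :
    (Φ (Δ₂ (U * ρ₁ * Uᴴ)) * H₂).trace - (U * ρ₁ * Uᴴ * H₂).trace =
      2 * (1 - 2 * (δ' : ℂ)) * θ * (ν₂ : ℂ) * (Real.tanh (β * ν₁) : ℂ) := by
  have hPe := vecMulVec_star_add_vecMulVec_star_eq_one hep hem hepm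
  have hPf := vecMulVec_star_add_vecMulVec_star_eq_one hfp hfm hfpm
  obtain rfl : Φ = krausMap Kr := funext hΦ
  rw [smul_add, smul_smul, smul_smul] at hρ₁
  subst hH₂ hρ₁ hδ' hθ
  rw [hΔ₂, trace_map_dephase_mul_sub_trace_mul _ (krausMap_one hKr') (trace_krausMap hKr) hfp hfm
    hPf, populations_sub_of_unitary hep hem hfp hPe hPf hU hU', ← neg_neg (Real.tanh _),
    ← Real.exp_neg_sub_exp_div_two_mul_cosh, RCLike.ofReal_eq_complex_ofReal]
  push_cast
  ring

/-- Average heat absorbed by the dephased qubit engine: in the qubit Otto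
setup — orthonormal bases `(e₊, e₋)` and `(f₊, f₋)` of `ℂ²`,
`H₂ = ν₂ (f₊f₊ᴴ − f₋f₋ᴴ)`, Gibbs state
`ρ₁ = (e^{−βν₁} e₊e₊ᴴ + e^{βν₁} e₋e₋ᴴ)/(2 cosh(βν₁))`, `U` unitary, `Φ` a unital channel,
`Δ₂` the dephasing channel in the `(f₊, f₋)` basis, `δ′ = |f₊ᴴ U e₋|²` and
`θ = f₋ᴴ Φ(f₊f₊ᴴ) f₋` — the dephased average heat absorbed
`⟨⟨Q_M⟩⟩ := Tr[Φ(Δ₂(U ρ₁ Uᴴ)) H₂] − Tr[U ρ₁ Uᴴ H₂]` equals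
`2 (1 − 2δ′) θ ν₂ tanh(βν₁)`. -/
theorem dephased_heat_absorbed_qubit
    (β ν₁ ν₂ : ℝ) (hβ : 0 < β) (hν₁ : 0 < ν₁) (hν₂ : 0 < ν₂)
    (ep em fp fm : Fin 2 → ℂ)
    (hep : star ep ⬝ᵥ ep = 1) (hem : star em ⬝ᵥ em = 1) (hepm : star ep ⬝ᵥ em = 0)
    (hfp : star fp ⬝ᵥ fp = 1) (hfm : star fm ⬝ᵥ fm = 1) (hfpm : star fp ⬝ᵥ fm = 0)
    (H₁ H₂ ρ₁ : Matrix (Fin 2) (Fin 2) ℂ)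
    (hH₁ : H₁ = (ν₁ : ℂ) • (vecMulVec ep (star ep) - vecMulVec em (star em)))
    (hH₂ : H₂ = (ν₂ : ℂ) • (vecMulVec fp (star fp) - vecMulVec fm (star fm)))
    (hρ₁ : ρ₁ = ((2 * Real.cosh (β * ν₁) : ℝ) : ℂ)⁻¹ •
        ((Real.exp (-(β * ν₁)) : ℂ) • vecMulVec ep (star ep) +
         (Real.exp (β * ν₁) : ℂ) • vecMulVec em (star em)))
    (U V : Matrix (Fin 2) (Fin 2) ℂ)
    (hU : Uᴴ * U = 1) (hU' : U * Uᴴ = 1)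
    (hV : Vᴴ * V = 1) (hV' : V * Vᴴ = 1)
    {K : ℕ} (Kr : Fin K → Matrix (Fin 2) (Fin 2) ℂ)
    (hKr : ∑ k, (Kr k)ᴴ * Kr k = 1) (hKr' : ∑ k, Kr k * (Kr k)ᴴ = 1)
    (Φ : Matrix (Fin 2) (Fin 2) ℂ → Matrix (Fin 2) (Fin 2) ℂ)
    (hΦ : ∀ X, Φ X = ∑ k, Kr k * X * (Kr k)ᴴ)
    (Δ₂ : Matrix (Fin 2) (Fin 2) ℂ → Matrix (Fin 2) (Fin 2) ℂ)
    (hΔ₂ : ∀ X, Δ₂ X = vecMulVec fp (star fp) * X * vecMulVec fp (star fp) +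
        vecMulVec fm (star fm) * X * vecMulVec fm (star fm))
    (δ' : ℝ) (hδ' : δ' = ‖star fp ⬝ᵥ (U *ᵥ em)‖ ^ 2)
    (θ : ℂ) (hθ : θ = star fm ⬝ᵥ (Φ (vecMulVec fp (star fp)) *ᵥ fm)) :
    (Φ (Δ₂ (U * ρ₁ * Uᴴ)) * H₂).trace - (U * ρ₁ * Uᴴ * H₂).trace =
      2 * (1 - 2 * (δ' : ℂ)) * θ * (ν₂ : ℂ) * (Real.tanh (β * ν₁) : ℂ) :=
  dephased_heat_absorbed_qubit_general β ν₁ ν₂ ep em fp fm hep hem hepm hfp hfm hfpm H₂ ρ₁ hH₂ hρ₁ U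
    hU hU' Kr hKr hKr' Φ hΦ Δ₂ hΔ₂ δ' hδ' θ hθ
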